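/- Let V be a finite type, c : V → V → ℝ≥0 a capacity function, S ⊆ V a subset, P ≥ 1 an integer, and s, t distinct vertices of V with s ∉ S and t ∉ S. Let c_s : V → V → ℝ≥0 be a sibling capacity function with c_s u v = 0 unless u ∈ S and v ∈ S, and for all u, v ∈ S let σ_{u,v} : Fin P ≃ Fin P be a bijection. Then the P-fold sibling replication of S (with sibling capacities c_s and sibling bijections σ) admits a minimum s-t cut A such that for every v ∈ S and all i, j : Fin P, the copy (v,i) lies in A if and only if the copy (v,j) lies in A. -/
import Mathlib


/-!
STATEMENT 10: The P-fold sibling replication of `S` (with sibling capacities `cs`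
supported on `S × S` and sibling bijections `σ`) admits a minimum s-t cut in which all
`P` copies of every vertex of `S` lie on the same side.
-/

open Finset

attribute [local instance] Classical.propDecidable

noncomputable section

/-- The value of the cut `A` for the capacity function `c`. -/
def cutValue {W : Type*} [Fintype W] (c : W → W → NNReal) (A : Finset W) : NNReal :=
  ∑ u ∈ A, ∑ v ∈ Aᶜ, c u v

/-- `A` is a minimum `s`-`t` cut for the capacity function `c`. -/
def IsMinCut {W : Type*} [Fintype W] (c : W → W → NNReal) (s t : W) (A : Finset W) : Prop :=
  s ∈ A ∧ t ∉ A ∧ ∀ B : Finset W, s ∈ B → t ∉ B → cutValue c A ≤ cutValue c B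

/-- The capacity function of the `P`-fold sibling replication of `S`, with sibling
capacities `cs` and sibling bijections `σ`. -/
def sibRepCap {V : Type*} (c cs : V → V → NNReal) (S : Set V) (P : ℕ)
    (σ : ↥S → ↥S → (Fin P ≃ Fin P)) :
    ({v : V // v ∉ S} ⊕ (↥S × Fin P)) → ({v : V // v ∉ S} ⊕ (↥S × Fin P)) → NNReal
  | Sum.inl u, Sum.inl v => c u.1 v.1
  | Sum.inl u, Sum.inr (v, _) => c u.1 v.1
  | Sum.inr (v, _), Sum.inl u => c v.1 u.1
  | Sum.inr (u, i), Sum.inr (v, j) =>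
      (if i = j then c u.1 v.1 else 0) + (if j = σ u v i then cs u.1 v.1 else 0)

set_option linter.unusedSectionVars false
set_option linter.unusedVariables false

namespace SibRepAux

/-! ### Indicator-sum lemmas -/

section Indic
variable {P : ℕ}

lemma L3 (m : ℕ) (hm : m ≤ P) :
    (∑ k ∈ Finset.range P, if k < m then (1:NNReal) else 0) = (m : NNReal) := by
  rw [Finset.sum_boole]
  congr 1
  rw [show (Finset.range P).filter (fun k => k < m) = Finset.range m from ?_, Finset.card_range]
  ext k; simp; omega

lemma L1 (m : ℕ) :
    (∑ k ∈ Finset.range P, if k < m then (0:NNReal) else 1) = ((P - m : ℕ) : NNReal) := by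
  have h : ∀ k, (if k < m then (0:NNReal) else 1) = (if ¬ k < m then 1 else 0) := by
    intro k; by_cases h : k < m <;> simp [h]
  simp only [h]
  rw [Finset.sum_boole]
  congr 1
  rw [show (Finset.range P).filter (fun k => ¬ k < m) = Finset.Ico m P from ?_, Nat.card_Ico]
  ext k; simp; omega

lemma L5 (m n : ℕ) (hm : m ≤ P) :
    (∑ k ∈ Finset.range P, (if k < m then (1:NNReal) else 0) * (if k < n then 0 else 1))
      = ((m - n : ℕ) : NNReal) := by
  have h : ∀ k, (if k < m then (1:NNReal) else 0) * (if k < n then 0 else 1)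
      = (if k < m ∧ ¬ k < n then 1 else 0) := by
    intro k; by_cases h1 : k < m <;> by_cases h2 : k < n <;> simp [h1, h2]
  simp only [h]
  rw [Finset.sum_boole]
  congr 1
  rw [show (Finset.range P).filter (fun k => k < m ∧ ¬ k < n) = Finset.Ico n m from ?_,
    Nat.card_Ico]
  ext k; simp; omega

variable {α : Type*} [Fintype α]

lemma L4 (p : α → Prop) [DecidablePred p] :
    (∑ i : α, if p i then (1:NNReal) else 0) = ((Finset.univ.filter p).card : NNReal) := by
  rw [Finset.sum_boole]

lemma L2 (p : α → Prop) [DecidablePred p] :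
    (∑ i : α, if p i then (0:NNReal) else 1)
      = ((Fintype.card α - (Finset.univ.filter p).card : ℕ) : NNReal) := by
  have h : ∀ i, (if p i then (0:NNReal) else 1) = (if ¬ p i then 1 else 0) := by
    intro i; by_cases h : p i <;> simp [h]
  simp only [h]
  rw [Finset.sum_boole]
  congr 1
  have := Finset.card_filter_add_card_filter_not (s := (Finset.univ : Finset α)) p
  simp only [Finset.card_univ] at this
  omega

lemma L6 (p q : α → Prop) [DecidablePred p] [DecidablePred q] :
    ((((Finset.univ.filter p).card : ℕ) - (Finset.univ.filter q).card : ℕ) : NNReal)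
      ≤ ∑ i : α, (if p i then (1:NNReal) else 0) * (if q i then 0 else 1) := by
  have h : ∀ i, (if p i then (1:NNReal) else 0) * (if q i then 0 else 1)
      = (if p i ∧ ¬ q i then 1 else 0) := by
    intro i; by_cases h1 : p i <;> by_cases h2 : q i <;> simp [h1, h2]
  simp only [h, Finset.sum_boole]
  rw [Nat.cast_le]
  have hsub : Finset.univ.filter p ⊆
      (Finset.univ.filter fun i => p i ∧ ¬ q i) ∪ Finset.univ.filter q := by
    intro i hi; simp at hi ⊢; tauto
  have := (Finset.card_le_card hsub).trans (Finset.card_union_le _ _)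
  omega

end Indic

/-! ### Generic block lemmas -/

section Blocks
variable {P : ℕ}

lemma blk2 (a w : NNReal) (e : ℕ → NNReal) (h : Fin P → NNReal)
    (H : ∑ k ∈ Finset.range P, e k = ∑ i : Fin P, h i) :
    ∑ k ∈ Finset.range P, ∑ _i : Fin P, a * e k * w
      = (P : NNReal) * ∑ i : Fin P, a * h i * w := by
  calc ∑ k ∈ Finset.range P, ∑ _i : Fin P, a * e k * w
      = ∑ k ∈ Finset.range P, (P : NNReal) * (a * e k * w) := by
        simp [Finset.sum_const, Finset.card_univ]
    _ = (P : NNReal) * ∑ k ∈ Finset.range P, a * e k * w := by rw [← Finset.mul_sum]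
    _ = (P : NNReal) * (a * (∑ k ∈ Finset.range P, e k) * w) := by
        rw [← Finset.sum_mul, ← Finset.mul_sum]
    _ = (P : NNReal) * (a * (∑ i : Fin P, h i) * w) := by rw [H]
    _ = (P : NNReal) * ∑ i : Fin P, a * h i * w := by
        rw [← Finset.sum_mul, ← Finset.mul_sum]

lemma blk3 {β : Type*} [Fintype β] (g : ℕ → NNReal) (p : Fin P → NNReal)
    (h w : β → NNReal) (H : ∑ k ∈ Finset.range P, g k = ∑ i : Fin P, p i) :
    ∑ k ∈ Finset.range P, ∑ _i : Fin P, ∑ v : β, g k * h v * w v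
      = (P : NNReal) * ∑ i : Fin P, ∑ v : β, p i * h v * w v := by
  have inner : ∀ x : NNReal, (∑ v : β, x * h v * w v) = x * ∑ v : β, h v * w v := by
    intro x
    simp only [mul_assoc]
    rw [← Finset.mul_sum]
  simp only [inner]
  calc ∑ k ∈ Finset.range P, ∑ _i : Fin P, g k * ∑ v : β, h v * w v
      = ∑ k ∈ Finset.range P, (P : NNReal) * (g k * ∑ v : β, h v * w v) := by
        simp [Finset.sum_const, Finset.card_univ]
    _ = (P : NNReal) * ((∑ k ∈ Finset.range P, g k) * ∑ v : β, h v * w v) := by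
        rw [← Finset.mul_sum, ← Finset.sum_mul]
    _ = (P : NNReal) * ((∑ i : Fin P, p i) * ∑ v : β, h v * w v) := by rw [H]
    _ = (P : NNReal) * ∑ i : Fin P, p i * ∑ v : β, h v * w v := by rw [← Finset.sum_mul]

lemma blk4 (e : Fin P ≃ Fin P) (aT : ℕ → NNReal) (p q : Fin P → NNReal) (c0 cs0 : NNReal)
    (H1 : ∑ k ∈ Finset.range P, aT k ≤ ∑ i : Fin P, p i * q i)
    (H2 : ∑ k ∈ Finset.range P, aT k ≤ ∑ i : Fin P, p i * q (e i)) :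
    ∑ k ∈ Finset.range P, ∑ i : Fin P, ∑ j : Fin P,
        aT k * ((if i = j then c0 else 0) + (if j = e i then cs0 else 0))
      ≤ (P : NNReal) * ∑ i : Fin P, ∑ j : Fin P,
          p i * q j * ((if i = j then c0 else 0) + (if j = e i then cs0 else 0)) := by
  have hX : ∀ i : Fin P,
      (∑ j : Fin P, ((if i = j then c0 else 0) + (if j = e i then cs0 else 0))) = c0 + cs0 := by
    intro i
    rw [Finset.sum_add_distrib, Finset.sum_ite_eq, Finset.sum_ite_eq']
    simp
  have hR : ∀ i : Fin P,
      (∑ j : Fin P, p i * q j * ((if i = j then c0 else 0) + (if j = e i then cs0 else 0)))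
        = p i * q i * c0 + p i * q (e i) * cs0 := by
    intro i
    simp only [mul_add, mul_ite, mul_zero]
    rw [Finset.sum_add_distrib, Finset.sum_ite_eq, Finset.sum_ite_eq']
    simp
  calc ∑ k ∈ Finset.range P, ∑ i : Fin P, ∑ j : Fin P,
        aT k * ((if i = j then c0 else 0) + (if j = e i then cs0 else 0))
      = ∑ k ∈ Finset.range P, aT k * ∑ i : Fin P, ∑ j : Fin P,
          ((if i = j then c0 else 0) + (if j = e i then cs0 else 0)) := by
        simp only [← Finset.mul_sum]
    _ = ∑ k ∈ Finset.range P, aT k * ((P : NNReal) * (c0 + cs0)) := by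
        simp only [hX, Finset.sum_const, Finset.card_univ, Fintype.card_fin, nsmul_eq_mul]
    _ = (∑ k ∈ Finset.range P, aT k) * ((P : NNReal) * (c0 + cs0)) := by
        rw [← Finset.sum_mul]
    _ = (P : NNReal) * ((∑ k ∈ Finset.range P, aT k) * c0
          + (∑ k ∈ Finset.range P, aT k) * cs0) := by ring
    _ ≤ (P : NNReal) * ((∑ i : Fin P, p i * q i) * c0
          + (∑ i : Fin P, p i * q (e i)) * cs0) := by gcongr
    _ = (P : NNReal) * ∑ i : Fin P, ∑ j : Fin P,
          p i * q j * ((if i = j then c0 else 0) + (if j = e i then cs0 else 0)) := by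
        congr 1
        rw [Finset.sum_mul, Finset.sum_mul, ← Finset.sum_add_distrib]
        exact Finset.sum_congr rfl fun i _ => (hR i).symm

end Blocks

/-! ### The replication-specific material -/

section SibAux

variable {V : Type*} [Fintype V] {S : Set V} {P : ℕ}

def nCopies (B : Finset ({v : V // v ∉ S} ⊕ (↥S × Fin P))) (v : ↥S) : ℕ :=
  (Finset.univ.filter fun i : Fin P => Sum.inr (v, i) ∈ B).card

lemma nCopies_le (B : Finset ({v : V // v ∉ S} ⊕ (↥S × Fin P))) (v : ↥S) :
    nCopies B v ≤ P := by
  simpa [nCopies] using (Finset.card_filter_le Finset.univ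
    (fun i : Fin P => Sum.inr (v, i) ∈ B)).trans_eq (by simp)

def threshCut (B : Finset ({v : V // v ∉ S} ⊕ (↥S × Fin P))) (k : ℕ) :
    Finset ({v : V // v ∉ S} ⊕ (↥S × Fin P)) :=
  Finset.univ.filter fun w => match w with
    | Sum.inl u => Sum.inl u ∈ B
    | Sum.inr (v, _) => k < nCopies B v

@[simp] lemma mem_threshCut_inl (B : Finset ({v : V // v ∉ S} ⊕ (↥S × Fin P)))
    (k : ℕ) (u : {v : V // v ∉ S}) :
    Sum.inl u ∈ threshCut B k ↔ Sum.inl u ∈ B := by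
  simp [threshCut]

@[simp] lemma mem_threshCut_inr (B : Finset ({v : V // v ∉ S} ⊕ (↥S × Fin P)))
    (k : ℕ) (v : ↥S) (i : Fin P) :
    Sum.inr (v, i) ∈ threshCut B k ↔ k < nCopies B v := by
  simp [threshCut]

lemma sum_indic_copies (B : Finset ({v : V // v ∉ S} ⊕ (↥S × Fin P))) (v : ↥S) :
    (∑ i : Fin P, if Sum.inr (v, i) ∈ B then (1:NNReal) else 0)
      = ((nCopies B v : ℕ) : NNReal) := by
  simp [L4, nCopies]

lemma sum_indic_copies_compl (B : Finset ({v : V // v ∉ S} ⊕ (↥S × Fin P))) (v : ↥S) :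
    (∑ i : Fin P, if Sum.inr (v, i) ∈ B then (0:NNReal) else 1)
      = ((P - nCopies B v : ℕ) : NNReal) := by
  simpa [nCopies] using L2 (fun i : Fin P => Sum.inr (v, i) ∈ B)

lemma sdiff_bound (B : Finset ({v : V // v ∉ S} ⊕ (↥S × Fin P))) (u v : ↥S) :
    ((nCopies B u - nCopies B v : ℕ) : NNReal)
      ≤ ∑ i : Fin P, (if Sum.inr (u, i) ∈ B then (1:NNReal) else 0)
          * (if Sum.inr (v, i) ∈ B then 0 else 1) := by
  simpa [nCopies] using
    L6 (fun i : Fin P => Sum.inr (u, i) ∈ B) (fun i : Fin P => Sum.inr (v, i) ∈ B)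

lemma sdiff_bound_comp (B : Finset ({v : V // v ∉ S} ⊕ (↥S × Fin P))) (u v : ↥S)
    (e : Fin P ≃ Fin P) :
    ((nCopies B u - nCopies B v : ℕ) : NNReal)
      ≤ ∑ i : Fin P, (if Sum.inr (u, i) ∈ B then (1:NNReal) else 0)
          * (if Sum.inr (v, e i) ∈ B then 0 else 1) := by
  have hcard : (Finset.univ.filter fun i : Fin P => Sum.inr (v, e i) ∈ B).card
      = nCopies B v := by
    have himg : Finset.image e (Finset.univ.filter fun i : Fin P => Sum.inr (v, e i) ∈ B)
        = Finset.univ.filter fun j : Fin P => Sum.inr (v, j) ∈ B := by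
      ext j
      simp only [Finset.mem_image, Finset.mem_filter, Finset.mem_univ, true_and]
      constructor
      · rintro ⟨i, hi, rfl⟩; exact hi
      · intro hj; exact ⟨e.symm j, by simpa using hj, by simp⟩
    rw [nCopies, ← himg, Finset.card_image_of_injective _ e.injective]
  have h := L6 (fun i : Fin P => Sum.inr (u, i) ∈ B) (fun i : Fin P => Sum.inr (v, e i) ∈ B)
  rw [hcard] at h
  simpa [nCopies] using h

lemma cutValue_eq_sum {W : Type*} [Fintype W] (c : W → W → NNReal) (A : Finset W) :
    cutValue c A = ∑ u : W, ∑ v : W,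
      (if u ∈ A then 1 else 0) * (if v ∈ A then 0 else 1) * c u v := by
  calc cutValue c A
      = ∑ u : W, if u ∈ A then ∑ v : W, if v ∈ Aᶜ then c u v else 0 else 0 := by
        rw [cutValue, Finset.sum_ite_mem, Finset.univ_inter]
        exact Finset.sum_congr rfl fun u _ => by rw [Finset.sum_ite_mem, Finset.univ_inter]
    _ = _ := by
        refine Finset.sum_congr rfl fun u _ => ?_
        by_cases hu : u ∈ A <;>
          simp [hu, Finset.mem_compl, ite_mul, mul_ite, ite_not]

variable (c cs : V → V → NNReal) (σ : ↥S → ↥S → (Fin P ≃ Fin P))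

lemma cutValue_sibRep_expand (A : Finset ({v : V // v ∉ S} ⊕ (↥S × Fin P))) :
    cutValue (sibRepCap c cs S P σ) A =
      (∑ u : {v : V // v ∉ S}, ∑ v : {v : V // v ∉ S},
        (if Sum.inl u ∈ A then 1 else 0) * (if Sum.inl v ∈ A then 0 else 1) * c u.1 v.1)
    + (∑ u : {v : V // v ∉ S}, ∑ v : ↥S, ∑ i : Fin P,
        (if Sum.inl u ∈ A then 1 else 0) * (if Sum.inr (v, i) ∈ A then 0 else 1) * c u.1 v.1)
    + (∑ u : ↥S, ∑ i : Fin P, ∑ v : {v : V // v ∉ S},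
        (if Sum.inr (u, i) ∈ A then 1 else 0) * (if Sum.inl v ∈ A then 0 else 1) * c u.1 v.1)
    + (∑ u : ↥S, ∑ v : ↥S, ∑ i : Fin P, ∑ j : Fin P,
        (if Sum.inr (u, i) ∈ A then 1 else 0) * (if Sum.inr (v, j) ∈ A then 0 else 1) *
          ((if i = j then c u.1 v.1 else 0) + (if j = σ u v i then cs u.1 v.1 else 0))) := by
  have step : cutValue (sibRepCap c cs S P σ) A =
      (∑ u : {v : V // v ∉ S}, ∑ v : {v : V // v ∉ S},
        (if Sum.inl u ∈ A then 1 else 0) * (if Sum.inl v ∈ A then 0 else 1) * c u.1 v.1)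
    + (∑ u : {v : V // v ∉ S}, ∑ v : ↥S, ∑ i : Fin P,
        (if Sum.inl u ∈ A then 1 else 0) * (if Sum.inr (v, i) ∈ A then 0 else 1) * c u.1 v.1)
    + (∑ u : ↥S, ∑ i : Fin P, ∑ v : {v : V // v ∉ S},
        (if Sum.inr (u, i) ∈ A then 1 else 0) * (if Sum.inl v ∈ A then 0 else 1) * c u.1 v.1)
    + (∑ u : ↥S, ∑ i : Fin P, ∑ v : ↥S, ∑ j : Fin P,
        (if Sum.inr (u, i) ∈ A then 1 else 0) * (if Sum.inr (v, j) ∈ A then 0 else 1) *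
          ((if i = j then c u.1 v.1 else 0) + (if j = σ u v i then cs u.1 v.1 else 0))) := by
    rw [cutValue_eq_sum]
    rw [Fintype.sum_sum_type]
    simp only [Fintype.sum_sum_type, Fintype.sum_prod_type, Finset.sum_add_distrib, sibRepCap]
    ring
  rw [step]
  congr 1
  refine Finset.sum_congr rfl fun u _ => ?_
  exact Finset.sum_comm

/-- The key inequality. -/
lemma key (B : Finset ({v : V // v ∉ S} ⊕ (↥S × Fin P))) :
    ∑ k ∈ Finset.range P, cutValue (sibRepCap c cs S P σ) (threshCut B k)
      ≤ (P : NNReal) * cutValue (sibRepCap c cs S P σ) B := by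
  simp only [cutValue_sibRep_expand c cs σ, mem_threshCut_inl, mem_threshCut_inr]
  rw [Finset.sum_add_distrib, Finset.sum_add_distrib, Finset.sum_add_distrib,
    mul_add, mul_add, mul_add]
  refine add_le_add (add_le_add (add_le_add ?_ ?_) ?_) ?_
  · -- block 1
    apply le_of_eq
    rw [Finset.sum_const, Finset.card_range, nsmul_eq_mul]
  · -- block 2
    apply le_of_eq
    rw [Finset.sum_comm, Finset.mul_sum]
    refine Finset.sum_congr rfl fun u _ => ?_
    rw [Finset.sum_comm, Finset.mul_sum]
    refine Finset.sum_congr rfl fun v _ => ?_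
    exact blk2 _ _ _ _ (by rw [L1, sum_indic_copies_compl])
  · -- block 3
    apply le_of_eq
    rw [Finset.sum_comm, Finset.mul_sum]
    refine Finset.sum_congr rfl fun u _ => ?_
    exact blk3 _ _ _ _ (by rw [L3 _ (nCopies_le B u), sum_indic_copies])
  · -- block 4
    rw [Finset.sum_comm, Finset.mul_sum]
    refine Finset.sum_le_sum fun u _ => ?_
    rw [Finset.sum_comm, Finset.mul_sum]
    refine Finset.sum_le_sum fun v _ => ?_
    refine blk4 (σ u v) _ _ _ _ _ ?_ ?_
    · rw [L5 _ _ (nCopies_le B u)]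
      exact sdiff_bound B u v
    · rw [L5 _ _ (nCopies_le B u)]
      exact sdiff_bound_comp B u v (σ u v)

end SibAux

end SibRepAux

open SibRepAux

theorem exists_minCut_sibRep_copies_same_side {V : Type*} [Fintype V]
    (c cs : V → V → NNReal) (S : Set V) (P : ℕ) (hP : 1 ≤ P)
    (σ : ↥S → ↥S → (Fin P ≃ Fin P))
    (s t : V) (hst : s ≠ t) (hs : s ∉ S) (ht : t ∉ S)
    (hcs : ∀ u v, ¬(u ∈ S ∧ v ∈ S) → cs u v = 0) :
    ∃ A : Finset ({v : V // v ∉ S} ⊕ (↥S × Fin P)),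
      IsMinCut (sibRepCap c cs S P σ) (Sum.inl ⟨s, hs⟩) (Sum.inl ⟨t, ht⟩) A ∧
      ∀ (v : ↥S) (i j : Fin P), Sum.inr (v, i) ∈ A ↔ Sum.inr (v, j) ∈ A := by
  set cap := sibRepCap c cs S P σ with hcap
  set F : Finset (Finset ({v : V // v ∉ S} ⊕ (↥S × Fin P))) :=
    Finset.univ.filter fun A =>
      Sum.inl ⟨s, hs⟩ ∈ A ∧ Sum.inl ⟨t, ht⟩ ∉ A ∧
        ∀ (v : ↥S) (i j : Fin P), Sum.inr (v, i) ∈ A ↔ Sum.inr (v, j) ∈ A with hF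
  have hne : F.Nonempty := by
    refine ⟨{Sum.inl ⟨s, hs⟩}, ?_⟩
    simp only [hF, Finset.mem_filter, Finset.mem_univ, true_and]
    refine ⟨Finset.mem_singleton_self _, ?_, ?_⟩
    · simp only [Finset.mem_singleton]
      intro h
      simp only [Sum.inl.injEq, Subtype.mk.injEq] at h
      exact hst h.symm
    · intro v i j; simp
  obtain ⟨A, hA, hmin⟩ := Finset.exists_min_image F (cutValue cap) hne
  rw [hF, Finset.mem_filter] at hA
  obtain ⟨-, hsA, htA, hsym⟩ := hA
  refine ⟨A, ⟨hsA, htA, ?_⟩, hsym⟩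
  intro B hsB htB
  have hthresh : ∀ k : ℕ, threshCut B k ∈ F := by
    intro k
    simp only [hF, Finset.mem_filter, Finset.mem_univ, true_and,
      mem_threshCut_inl, mem_threshCut_inr]
    exact ⟨hsB, htB, fun v i j => trivial⟩
  have h1 : (P : NNReal) * cutValue cap A ≤ (P : NNReal) * cutValue cap B := by
    calc (P : NNReal) * cutValue cap A
        = ∑ _k ∈ Finset.range P, cutValue cap A := by
          rw [Finset.sum_const, Finset.card_range, nsmul_eq_mul]
      _ ≤ ∑ k ∈ Finset.range P, cutValue cap (threshCut B k) :=
          Finset.sum_le_sum fun k _ => hmin _ (hthresh k)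
      _ ≤ (P : NNReal) * cutValue cap B := key c cs σ B
  have hP0 : (0 : NNReal) < (P : NNReal) := by
    exact_mod_cast Nat.lt_of_lt_of_le Nat.zero_lt_one hP
  exact le_of_mul_le_mul_left h1 hP0

end
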